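/- Let k be a field and I_λ = ⟨(1+λ)y − (1−λ)x, y² − x³ − x² − t(1−t)x + t²⟩ ⊆ k[x,y,t] for a fixed λ ∈ k with λ ≠ −1. Then t is not a zero divisor in k[x,y,t]/I_λ. -/

import Mathlib

open MvPolynomial

/-- The ideal `I_λ = ⟨(1+λ)y − (1−λ)x, y² − x³ − x² − t(1−t)x + t²⟩` in `k[x,y,t]`,
where `x = X 0`, `y = X 1`, `t = X 2`. -/
noncomputable def idealIlam (k : Type) [Field k] (lam : k) : Ideal (MvPolynomial (Fin 3) k) :=
  Ideal.span {C (1 + lam) * X 1 - C (1 - lam) * X 0,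
    (X 1 : MvPolynomial (Fin 3) k) ^ 2 - X 0 ^ 3 - X 0 ^ 2 - X 2 * (1 - X 2) * X 0 + X 2 ^ 2}

/-- For an algebra endomorphism `F` of `k[x₀,x₁,x₂]` and an ideal `J` containing all
`X i - F (X i)`, every `q` satisfies `q - F q ∈ J`. -/
lemma sub_algHom_mem {k : Type} [Field k]
    (F : MvPolynomial (Fin 3) k →ₐ[k] MvPolynomial (Fin 3) k)
    (J : Ideal (MvPolynomial (Fin 3) k))
    (h : ∀ i, X i - F (X i) ∈ J) (q : MvPolynomial (Fin 3) k) :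
    q - F q ∈ J := by
  induction q using MvPolynomial.induction_on with
  | C a =>
      have hFC : F (C a) = C a := by
        simpa [MvPolynomial.algebraMap_eq] using F.commutes a
      rw [hFC, sub_self]
      exact J.zero_mem
  | add p q hp hq =>
      have hrw : p + q - F (p + q) = (p - F p) + (q - F q) := by
        rw [map_add]; ring
      rw [hrw]
      exact J.add_mem hp hq
  | mul_X p i hp =>
      have hrw : p * X i - F (p * X i)
          = (p - F p) * X i + F p * (X i - F (X i)) := by
        rw [map_mul]; ring
      rw [hrw]
      exact J.add_mem (J.mul_mem_right _ hp) (J.mul_mem_left _ (h i))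

theorem t_nonZeroDivisor_in_family (k : Type) [Field k] (lam : k) (hlam : lam ≠ -1) :
    Ideal.Quotient.mk (idealIlam k lam) (X 2) ∈
      nonZeroDivisors (MvPolynomial (Fin 3) k ⧸ idealIlam k lam) := by
  have h1 : (1 + lam) ≠ 0 := by
    intro h; exact hlam (by linear_combination h)
  set μ : k := (1 - lam) / (1 + lam) with hμdef
  have hμk : (1 + lam) * μ = 1 - lam := by
    rw [hμdef]; field_simp
  set L : MvPolynomial (Fin 3) k := C (1 + lam) * X 1 - C (1 - lam) * X 0 with hL
  set f : MvPolynomial (Fin 3) k :=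
    X 1 ^ 2 - X 0 ^ 3 - X 0 ^ 2 - X 2 * (1 - X 2) * X 0 + X 2 ^ 2 with hf
  have hI : idealIlam k lam = Ideal.span {L, f} := rfl
  set ψ : MvPolynomial (Fin 3) k →ₐ[k] MvPolynomial (Fin 3) k :=
    aeval (fun i : Fin 3 => if i = 1 then C μ * X 0 else X i) with hψdef
  set θ : MvPolynomial (Fin 3) k →ₐ[k] MvPolynomial (Fin 3) k :=
    aeval (fun i : Fin 3 => if i = 2 then 0 else X i) with hθdef
  have hψX : ∀ i, ψ (X i) = if i = 1 then C μ * X 0 else X i := fun i => aeval_X _ i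
  have hθX : ∀ i, θ (X i) = if i = 2 then 0 else X i := fun i => aeval_X _ i
  have hψ0 : ψ (X 0) = X 0 := by rw [hψX, if_neg (by decide)]
  have hψ1 : ψ (X 1) = C μ * X 0 := by rw [hψX, if_pos rfl]
  have hψ2 : ψ (X 2) = X 2 := by rw [hψX, if_neg (by decide)]
  have hθ0 : θ (X 0) = X 0 := by rw [hθX, if_neg (by decide)]
  have hθ1 : θ (X 1) = X 1 := by rw [hθX, if_neg (by decide)]
  have hθ2 : θ (X 2) = 0 := by rw [hθX, if_pos rfl]
  have hψC : ∀ a : k, ψ (C a) = C a := fun a => by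
    simpa [MvPolynomial.algebraMap_eq] using ψ.commutes a
  have hθC : ∀ a : k, θ (C a) = C a := fun a => by
    simpa [MvPolynomial.algebraMap_eq] using θ.commutes a
  -- ψ kills L
  have hψL : ψ L = 0 := by
    rw [hL, map_sub, map_mul, map_mul, hψC, hψC, hψ0, hψ1, ← mul_assoc, ← C_mul, hμk, sub_self]
  -- key memberships for span {L, f}
  have hLmem : L ∈ Ideal.span {L, f} := Ideal.subset_span (by simp)
  have hfmem : f ∈ Ideal.span {L, f} := Ideal.subset_span (by simp)
  have hXψ : ∀ i, X i - ψ (X i) ∈ Ideal.span {L, f} := by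
    intro i
    fin_cases i
    · show X 0 - ψ (X 0) ∈ Ideal.span {L, f}
      rw [hψ0, sub_self]; exact Ideal.zero_mem _
    · show X 1 - ψ (X 1) ∈ Ideal.span {L, f}
      rw [hψ1]
      have hEq : X 1 - C μ * X 0 = C (1 + lam)⁻¹ * L := by
        rw [hL, mul_sub, ← mul_assoc, ← mul_assoc, ← C_mul, ← C_mul,
          inv_mul_cancel₀ h1, C_1, one_mul]
        congr 2
        rw [hμdef]
        field_simp
      rw [hEq]
      exact Ideal.mul_mem_left _ _ hLmem
    · show X 2 - ψ (X 2) ∈ Ideal.span {L, f}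
      rw [hψ2, sub_self]; exact Ideal.zero_mem _
  have hXθ : ∀ i, X i - θ (X i) ∈ Ideal.span {(X 2 : MvPolynomial (Fin 3) k)} := by
    intro i
    fin_cases i
    · show X 0 - θ (X 0) ∈ _
      rw [hθ0, sub_self]; exact Ideal.zero_mem _
    · show X 1 - θ (X 1) ∈ _
      rw [hθ1, sub_self]; exact Ideal.zero_mem _
    · show X 2 - θ (X 2) ∈ _
      rw [hθ2, sub_zero]; exact Ideal.subset_span (by simp)
  -- the image cubic at t = 0
  have hg0 : θ (ψ f) = X 0 ^ 2 * (C μ ^ 2 - 1 - X 0) := by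
    rw [hf]
    simp only [map_sub, map_add, map_mul, map_pow, map_one, hψ0, hψ1, hψ2, hθ0, hθ2,
      hψC, hθC]
    ring
  have hgne : θ (ψ f) ≠ 0 := by
    rw [hg0]
    refine mul_ne_zero (pow_ne_zero _ (MvPolynomial.X_ne_zero 0)) ?_
    intro h
    have e0 := congrArg (aeval (fun _ : Fin 3 => (0 : k))) h
    have e1 := congrArg (aeval (fun _ : Fin 3 => (1 : k))) h
    simp only [map_sub, map_pow, map_one, aeval_C, aeval_X, map_zero,
      MvPolynomial.algebraMap_eq, MvPolynomial.aeval_C] at e0 e1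
    exact (one_ne_zero : (1 : k) ≠ 0) (by linear_combination e0 - e1)
  -- main argument
  rw [mem_nonZeroDivisors_iff_right]
  intro q hq
  obtain ⟨p, rfl⟩ := Ideal.Quotient.mk_surjective q
  rw [← map_mul, Ideal.Quotient.eq_zero_iff_mem, hI, Ideal.mem_span_pair] at hq
  obtain ⟨a, b, hab⟩ := hq
  rw [Ideal.Quotient.eq_zero_iff_mem, hI]
  -- apply ψ to the relation
  have h2 := congrArg ψ hab
  simp only [map_add, map_mul, hψL, mul_zero, zero_add, hψ2] at h2
  -- h2 : ψ b * ψ f = ψ p * X 2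
  have h4 := congrArg θ h2
  simp only [map_mul, hθ2, mul_zero] at h4
  have hb0 : θ (ψ b) = 0 := by
    rcases mul_eq_zero.mp h4 with h | h
    · exact h
    · exact absurd h hgne
  have hbmem : ψ b ∈ Ideal.span {(X 2 : MvPolynomial (Fin 3) k)} := by
    have := sub_algHom_mem θ _ hXθ (ψ b)
    rwa [hb0, sub_zero] at this
  obtain ⟨c, hc⟩ := Ideal.mem_span_singleton.mp hbmem
  have h5 : X 2 * (c * ψ f) = X 2 * ψ p := by
    linear_combination h2 - ψ f * hc
  have h6 : c * ψ f = ψ p := mul_left_cancel₀ (MvPolynomial.X_ne_zero 2) h5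
  have hpψ : p - ψ p ∈ Ideal.span {L, f} := sub_algHom_mem ψ _ hXψ p
  have hfψ : ψ f ∈ Ideal.span {L, f} := by
    have hsub := sub_algHom_mem ψ _ hXψ f
    have := Ideal.sub_mem _ hfmem hsub
    simpa using this
  have hfinal : p = (p - ψ p) + c * ψ f := by rw [h6]; ring
  rw [hfinal]
  exact Ideal.add_mem _ hpψ (Ideal.mul_mem_left _ _ hfψ)
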